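/- (Support Decomposition) Let Y be a countable type, let α ∈ (0,1), and let π and p be probability mass functions on Y. Let A := {y | p(y) > 0}, assume π(A) := ∑_{y ∈ A} π(y) > 0, and define the renormalized pmf π_A by π_A(y) := π(y)/π(A) for y ∈ A and π_A(y) := 0 otherwise. Then the extended α-divergence decomposes as D_α(π,p) = (1 − π(A)^α)/(α·(1 − α)) + π(A)^α · D_α(π_A,p). -/

import Mathlib

/-!
Write `f` for the α-divergence generator and `c = π(A)`. On the support `A` we have
`π_A = π / c`, and the homogeneity `(t / c) ^ α = t ^ α / c ^ α` gives, for every `t ≥ 0`,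
`c ^ α f(t / c) = f(t) + (1 - c ^ (α - 1)) t / (α - 1) + (c ^ α - 1) / α`.
Multiplying by `p y` with `t = π(y) / p(y)` and summing over `A` (where `p` has mass `1` and `π`
has mass `c`) expresses `c ^ α` times the support part of `D_α(π_A, p)` through that of
`D_α(π, p)`; `π_A` has no mass off `A`, while `π` has mass `1 - c` there, and the constants
collect into the leakage penalty.
-/

open Real

noncomputable section

def alphaGen (α t : ℝ) : ℝ := (t ^ α - α * t - (1 - α)) / (α * (α - 1))

def alphaDivOnSupport {Y : Type*} (α : ℝ) (q p : Y → ℝ) : ℝ :=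
  ∑' y, if 0 < p y then p y * alphaGen α (q y / p y) else 0

def alphaDiv {Y : Type*} (α : ℝ) (q p : Y → ℝ) : ℝ :=
  alphaDivOnSupport α q p + (∑' y, if 0 < p y then 0 else q y) / (1 - α)

end

theorem summable_of_tsum_ne_zero {Y M : Type*} [AddCommMonoid M] [TopologicalSpace M]
    {f : Y → M} (h : ∑' y, f y ≠ 0) : Summable f := by
  by_contra hf
  exact h (tsum_eq_zero_of_not_summable hf)

section alphaGen

variable {α : ℝ}

theorem rpow_le_weighted_mean (hα0 : 0 ≤ α) (hα1 : α ≤ 1) {t : ℝ} (ht : 0 ≤ t) :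
    t ^ α ≤ α * t + (1 - α) := by
  have := rpow_one_add_le_one_add_mul_self (s := t - 1) (by linarith) hα0 hα1
  rw [add_sub_cancel] at this
  linarith

theorem alphaGen_nonneg (hα : α ∈ Set.Ioo (0 : ℝ) 1) {t : ℝ} (ht : 0 ≤ t) :
    0 ≤ alphaGen α t := by
  obtain ⟨hα0, hα1⟩ := hα
  have := rpow_le_weighted_mean hα0.le hα1.le ht
  exact div_nonneg_of_nonpos (by linarith) (mul_nonpos_of_nonneg_of_nonpos hα0.le (by linarith))

theorem mul_alphaGen_div_le (hα : α ∈ Set.Ioo (0 : ℝ) 1) {q p : ℝ} (hq : 0 ≤ q) (hp : 0 < p) :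
    p * alphaGen α (q / p) ≤ (α * q + (1 - α) * p) / (α * (1 - α)) := by
  obtain ⟨hα0, hα1⟩ := hα
  have hpow : 0 ≤ p * (q / p) ^ α := mul_nonneg hp.le (rpow_nonneg (div_nonneg hq hp.le) α)
  have hform : p * alphaGen α (q / p) =
      (α * q + (1 - α) * p - p * (q / p) ^ α) / (α * (1 - α)) := by
    unfold alphaGen
    have hα1' : α - 1 ≠ 0 := by linarith
    have h1α : 1 - α ≠ 0 := by linarith
    field_simp
    ring
  rw [hform]
  gcongr
  linarith

theorem rpow_mul_alphaGen_div (hα0 : α ≠ 0) (hα1 : α ≠ 1) {c t : ℝ} (hc : 0 < c) (ht : 0 ≤ t) :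
    c ^ α * alphaGen α (t / c) =
      alphaGen α t + (1 - c ^ α / c) / (α - 1) * t + (c ^ α - 1) / α := by
  have hα1' : α - 1 ≠ 0 := sub_ne_zero.mpr hα1
  have hcα : c ^ α ≠ 0 := (rpow_pos_of_pos hc α).ne'
  unfold alphaGen
  rw [div_rpow ht hc.le]
  field_simp
  ring

end alphaGen

section alphaDiv

variable {Y : Type*} {α : ℝ} {q p : Y → ℝ}

theorem summable_ite_pos {f : Y → ℝ} (hf : Summable f) (p : Y → ℝ) :
    Summable fun y ↦ if 0 < p y then f y else 0 :=
  hf.indicator {y | 0 < p y}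

theorem tsum_ite_pos_zero (hqs : Summable q) :
    ∑' y, (if 0 < p y then 0 else q y) = ∑' y, q y - ∑' y, if 0 < p y then q y else 0 := by
  rw [← (hqs.tsum_sub (summable_ite_pos hqs p))]
  exact tsum_congr fun y ↦ by split_ifs <;> ring

theorem summable_alphaDivOnSupport_terms (hα : α ∈ Set.Ioo (0 : ℝ) 1)
    (hq : ∀ y, 0 ≤ q y) (hqs : Summable q) (hp : ∀ y, 0 ≤ p y) (hps : Summable p) :
    Summable fun y ↦ if 0 < p y then p y * alphaGen α (q y / p y) else 0 := by
  have h1α : 0 < 1 - α := by linarith [hα.2]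
  refine Summable.of_nonneg_of_le (fun y ↦ ?_) (fun y ↦ ?_)
    (((hqs.mul_left α).add (hps.mul_left (1 - α))).div_const (α * (1 - α)))
  · split_ifs with hpy
    · exact mul_nonneg hpy.le (alphaGen_nonneg hα (div_nonneg (hq y) hpy.le))
    · exact le_rfl
  · split_ifs with hpy
    · exact mul_alphaGen_div_le hα (hq y) hpy
    · exact div_nonneg (add_nonneg (mul_nonneg hα.1.le (hq y)) (mul_nonneg h1α.le (hp y)))
        (mul_nonneg hα.1.le h1α.le)

theorem rpow_mul_alphaDivOnSupport (hα : α ∈ Set.Ioo (0 : ℝ) 1)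
    (hq : ∀ y, 0 ≤ q y) (hqs : Summable q) (hp : ∀ y, 0 ≤ p y) (hps : Summable p)
    {c : ℝ} (hc : 0 < c) {q' : Y → ℝ} (hq' : ∀ y, 0 < p y → q' y = q y / c) :
    c ^ α * alphaDivOnSupport α q' p =
      alphaDivOnSupport α q p + (1 - c ^ α / c) / (α - 1) * (∑' y, if 0 < p y then q y else 0)
        + (c ^ α - 1) / α * ∑' y, p y := by
  have hterm : ∀ y, c ^ α * (if 0 < p y then p y * alphaGen α (q' y / p y) else 0) =
      (if 0 < p y then p y * alphaGen α (q y / p y) else 0)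
        + (1 - c ^ α / c) / (α - 1) * (if 0 < p y then q y else 0) + (c ^ α - 1) / α * p y := by
    intro y
    split_ifs with hpy
    · rw [hq' y hpy, div_right_comm, mul_left_comm,
        rpow_mul_alphaGen_div hα.1.ne' hα.2.ne hc (div_nonneg (hq y) hpy.le)]
      field_simp
    · simp [le_antisymm (not_lt.mp hpy) (hp y)]
  unfold alphaDivOnSupport
  rw [← tsum_mul_left, tsum_congr hterm,
    ((summable_alphaDivOnSupport_terms hα hq hqs hp hps).add
      ((summable_ite_pos hqs p).mul_left _)).tsum_add (hps.mul_left _),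
    (summable_alphaDivOnSupport_terms hα hq hqs hp hps).tsum_add
      ((summable_ite_pos hqs p).mul_left _), tsum_mul_left, tsum_mul_left]

end alphaDiv

theorem stmt_11_general {Y : Type*} (α : ℝ) (hα : α ∈ Set.Ioo (0 : ℝ) 1)
    (q p : Y → ℝ) (hqnn : ∀ y, 0 ≤ q y) (hqsum : ∑' y, q y = 1)
    (hpnn : ∀ y, 0 ≤ p y) (hpsum : ∑' y, p y = 1)
    (qA : ℝ) (hqA : qA = ∑' y, if 0 < p y then q y else 0) (hqApos : 0 < qA)
    (qcond : Y → ℝ) (hqcond : ∀ y, qcond y = if 0 < p y then q y / qA else 0) :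
    (∑' y, if 0 < p y then
        p y * (((q y / p y) ^ α - α * (q y / p y) - (1 - α)) / (α * (α - 1))) else 0)
      + (∑' y, if 0 < p y then 0 else q y) / (1 - α)
    = (1 - qA ^ α) / (α * (1 - α))
      + qA ^ α *
        ((∑' y, if 0 < p y then
            p y * (((qcond y / p y) ^ α - α * (qcond y / p y) - (1 - α)) / (α * (α - 1))) else 0)
          + (∑' y, if 0 < p y then 0 else qcond y) / (1 - α)) := by
  change alphaDiv α q p = (1 - qA ^ α) / (α * (1 - α)) + qA ^ α * alphaDiv α qcond p
  have hqs : Summable q := summable_of_tsum_ne_zero (hqsum ▸ one_ne_zero)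
  have hps : Summable p := summable_of_tsum_ne_zero (hpsum ▸ one_ne_zero)
  have hshape := rpow_mul_alphaDivOnSupport hα hqnn hqs hpnn hps hqApos (q' := qcond)
    fun y hy ↦ by rw [hqcond y, if_pos hy]
  have hleak : ∑' y, (if 0 < p y then 0 else q y) = 1 - qA := by
    rw [tsum_ite_pos_zero hqs, hqsum, hqA]
  have hleak_cond : ∑' y, (if 0 < p y then 0 else qcond y) = 0 :=
    (tsum_congr fun y ↦ by split_ifs with hy <;> simp [hqcond y, hy]).trans tsum_zero
  obtain ⟨hα0, hα1⟩ := hα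
  have hα1' : α - 1 ≠ 0 := by linarith
  have h1α : 1 - α ≠ 0 := by linarith
  unfold alphaDiv
  rw [hleak, hleak_cond, zero_div, add_zero, hshape, ← hqA, hpsum]
  field_simp
  ring

/-- Support Decomposition: the extended α-divergence (with boundary
term) decomposes as a leakage penalty plus a rescaled shape divergence:
`D_α(π,p) = (1 − π(A)^α)/(α(1 − α)) + π(A)^α · D_α(π_A,p)`. -/
theorem stmt_11 {Y : Type*} [Countable Y] (α : ℝ) (hα : α ∈ Set.Ioo (0 : ℝ) 1)
    (q p : Y → ℝ) (hqnn : ∀ y, 0 ≤ q y) (hqsum : ∑' y, q y = 1)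
    (hpnn : ∀ y, 0 ≤ p y) (hpsum : ∑' y, p y = 1)
    (qA : ℝ) (hqA : qA = ∑' y, if 0 < p y then q y else 0) (hqApos : 0 < qA)
    (qcond : Y → ℝ) (hqcond : ∀ y, qcond y = if 0 < p y then q y / qA else 0) :
    (∑' y, if 0 < p y then
        p y * (((q y / p y) ^ α - α * (q y / p y) - (1 - α)) / (α * (α - 1))) else 0)
      + (∑' y, if 0 < p y then 0 else q y) / (1 - α)
    = (1 - qA ^ α) / (α * (1 - α))
      + qA ^ α *
        ((∑' y, if 0 < p y then
            p y * (((qcond y / p y) ^ α - α * (qcond y / p y) - (1 - α)) / (α * (α - 1))) else 0)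
          + (∑' y, if 0 < p y then 0 else qcond y) / (1 - α)) :=
  stmt_11_general α hα q p hqnn hqsum hpnn hpsum qA hqA hqApos qcond hqcond
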